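/- arXiv:2301.03181 — 4 statements merged into one kernel-verified Lean document; each statement's English description precedes it below -/
import Mathlib

section
/- Type C linkage for two e-operators: let λ+ρ be a strictly decreasing sequence of positive integers (a ρ-shifted dominant weight of type C_N) and suppose both μ = λ − ε_i and ν = λ − ε_j are dominant, with i < j. Then μ+ρ and ν+ρ lie in the same W_ℓ-orbit under the ℓ-scaled affine Weyl group action if and only if (λ+ρ)_i ≡ (λ+ρ)_j (mod ℓ). -/
/-- The standard basis vector `ε_i` of `ℚ^N`. -/
def eps {N : ℕ} (i : Fin N) : Fin N → ℚ := fun t => if t = i then 1 else 0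

/-- The affine reflection `s_{α,k}` with root `α`, coroot `αv` and constant `c = k ℓ_α`:
`x ↦ x − ((x, αv) − c) α`, i.e. `s_α(x) + c·α`. -/
def affRef {N : ℕ} (α αv : Fin N → ℚ) (c : ℚ) (x : Fin N → ℚ) : Fin N → ℚ :=
  fun t => x t - ((∑ s, x s * αv s) - c) * α t

/-- The affine reflections generating `W_ℓ` in type `C_N`: the roots are
`ε_i ± ε_j` (`i < j`, coroot equal to the root, `ℓ_α = ℓ`) and the long roots `2ε_i`
(coroot `ε_i`, `ℓ_α = ℓ / gcd(ℓ,2)`). -/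
def IsCRef (N ℓ : ℕ) (f : (Fin N → ℚ) → (Fin N → ℚ)) : Prop :=
  (∃ i j : Fin N, ∃ k : ℤ, i < j ∧
    (f = affRef (eps i - eps j) (eps i - eps j) ((k : ℚ) * ℓ) ∨
     f = affRef (eps i + eps j) (eps i + eps j) ((k : ℚ) * ℓ))) ∨
  (∃ i : Fin N, ∃ k : ℤ,
    f = affRef ((2 : ℚ) • eps i) (eps i) ((k : ℚ) * ((ℓ : ℚ) / (Nat.gcd ℓ 2))))

/-- Two (ρ-shifted) weights are linked in type `C_N` if they lie in the same orbit of
the group generated by the affine reflections of `W_ℓ`. -/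
def CLinked (N ℓ : ℕ) (x y : Fin N → ℚ) : Prop :=
  Relation.EqvGen (fun u v => ∃ f, IsCRef N ℓ f ∧ v = f u) x y

/-- Dominant weights of type `C_N`: weakly decreasing non-negative integer tuples. -/
def DominantC (N : ℕ) (lam : Fin N → ℤ) : Prop :=
  (∀ s t : Fin N, s ≤ t → lam t ≤ lam s) ∧ ∀ t, 0 ≤ lam t

/-- `λ − ε_i`. -/
def subE {N : ℕ} (lam : Fin N → ℤ) (i : Fin N) : Fin N → ℤ :=
  fun t => lam t - if t = i then 1 else 0

/-- `λ + ε_i`. -/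
def addE {N : ℕ} (lam : Fin N → ℤ) (i : Fin N) : Fin N → ℤ :=
  fun t => lam t + if t = i then 1 else 0

/-- The ρ-shift in type `C_N`: `(λ+ρ)_j = λ_j + (N+1−j)` (0-indexed: `λ_j + (N−j)`). -/
def shiftC (N : ℕ) (lam : Fin N → ℤ) : Fin N → ℚ :=
  fun t => (lam t : ℚ) + ((N : ℚ) - ((t : ℕ) : ℚ))


section LinkageAux

/-- residue relation mod `ℓ` up to sign -/
def relC (ℓ : ℕ) (u v : ℚ) : Prop := ∃ k : ℤ, v = u + k * ℓ ∨ v = -u + k * ℓ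

lemma relC_refl (ℓ : ℕ) (u : ℚ) : relC ℓ u u := ⟨0, Or.inl (by push_cast; ring)⟩

lemma relC_symm {ℓ : ℕ} {u v : ℚ} (h : relC ℓ u v) : relC ℓ v u := by
  obtain ⟨k, h | h⟩ := h
  · exact ⟨-k, Or.inl (by push_cast; linarith)⟩
  · exact ⟨k, Or.inr (by push_cast; linarith)⟩

lemma relC_trans {ℓ : ℕ} {u v w : ℚ} (h : relC ℓ u v) (h' : relC ℓ v w) : relC ℓ u w := by
  obtain ⟨k, h | h⟩ := h <;> obtain ⟨m, h' | h'⟩ := h'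
  · exact ⟨k + m, Or.inl (by push_cast; linarith)⟩
  · exact ⟨m - k, Or.inr (by push_cast; linarith)⟩
  · exact ⟨k + m, Or.inr (by push_cast; linarith)⟩
  · exact ⟨m - k, Or.inl (by push_cast; linarith)⟩

/-- the residue class of `u` mod `ℓ`, up to sign -/
def clsC (ℓ : ℕ) (u : ℚ) : Set ℚ := {v | relC ℓ u v}

lemma clsC_eq_iff {ℓ : ℕ} {u v : ℚ} : clsC ℓ u = clsC ℓ v ↔ relC ℓ u v := by
  constructor
  · intro h
    have hv : v ∈ clsC ℓ v := relC_refl ℓ v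
    rw [← h] at hv; exact hv
  · intro h
    ext w
    exact ⟨fun hw => relC_trans (relC_symm h) hw, fun hw => relC_trans h hw⟩

lemma sum_eps {N : ℕ} (x : Fin N → ℚ) (i : Fin N) : (∑ s, x s * eps i s) = x i := by
  simp [eps, mul_ite]

lemma sum_eps_sub {N : ℕ} (x : Fin N → ℚ) (i j : Fin N) :
    (∑ s, x s * (eps i - eps j) s) = x i - x j := by
  simp [Pi.sub_apply, mul_sub, Finset.sum_sub_distrib, eps, mul_ite]

lemma sum_eps_add {N : ℕ} (x : Fin N → ℚ) (i j : Fin N) :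
    (∑ s, x s * (eps i + eps j) s) = x i + x j := by
  simp [Pi.add_apply, mul_add, Finset.sum_add_distrib, eps, mul_ite]

/-- the multiset of sign-residue classes of the coordinates: an invariant of `W_ℓ` -/
def invC (N ℓ : ℕ) (x : Fin N → ℚ) : Multiset (Set ℚ) :=
  Multiset.map (fun t => clsC ℓ (x t)) Finset.univ.val

lemma invC_swap {N ℓ : ℕ} (x y : Fin N → ℚ) (i j : Fin N)
    (h : ∀ t, clsC ℓ (y t) = clsC ℓ (x (Equiv.swap i j t))) :
    invC N ℓ y = invC N ℓ x := by
  unfold invC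
  have h1 : (Finset.univ.map (Equiv.swap i j).toEmbedding) = Finset.univ :=
    Finset.map_univ_equiv _
  have h2 := congrArg Finset.val h1
  rw [Finset.map_val] at h2
  simp only [Equiv.coe_toEmbedding] at h2
  calc Multiset.map (fun t => clsC ℓ (y t)) Finset.univ.val
      = Multiset.map (fun t => clsC ℓ (x (Equiv.swap i j t))) Finset.univ.val :=
        Multiset.map_congr rfl (fun t _ => h t)
    _ = Multiset.map (fun t => clsC ℓ (x t)) (Multiset.map (Equiv.swap i j) Finset.univ.val) := by
        rw [Multiset.map_map]; rfl
    _ = Multiset.map (fun t => clsC ℓ (x t)) Finset.univ.val := by rw [h2]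

lemma invC_step {N ℓ : ℕ} (f : (Fin N → ℚ) → (Fin N → ℚ)) (hf : IsCRef N ℓ f)
    (x : Fin N → ℚ) : invC N ℓ (f x) = invC N ℓ x := by
  rcases hf with ⟨i, j, k, hij, hf | hf⟩ | ⟨i, k, hf⟩
  · subst hf
    apply invC_swap
    intro t
    rw [clsC_eq_iff]
    rcases eq_or_ne t i with hti | hti
    · rw [hti, Equiv.swap_apply_left]
      have : affRef (eps i - eps j) (eps i - eps j) ((k:ℚ)*ℓ) x i = x j + k * ℓ := by
        unfold affRef
        rw [sum_eps_sub]
        simp [eps, Pi.sub_apply, hij.ne, hij.ne']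
        ring
      rw [this]; exact ⟨-k, Or.inl (by push_cast; ring)⟩
    · rcases eq_or_ne t j with htj | htj
      · rw [htj, Equiv.swap_apply_right]
        have : affRef (eps i - eps j) (eps i - eps j) ((k:ℚ)*ℓ) x j = x i + (-k) * ℓ := by
          unfold affRef
          rw [sum_eps_sub]
          simp [eps, Pi.sub_apply, hij.ne, hij.ne']
          ring
        rw [this]; exact ⟨k, Or.inl (by push_cast; ring)⟩
      · rw [Equiv.swap_apply_of_ne_of_ne hti htj]
        have : affRef (eps i - eps j) (eps i - eps j) ((k:ℚ)*ℓ) x t = x t := by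
          unfold affRef
          simp [eps, Pi.sub_apply, hti, htj]
        rw [this]; exact relC_refl _ _
  · subst hf
    apply invC_swap
    intro t
    rw [clsC_eq_iff]
    rcases eq_or_ne t i with hti | hti
    · rw [hti, Equiv.swap_apply_left]
      have : affRef (eps i + eps j) (eps i + eps j) ((k:ℚ)*ℓ) x i = -(x j) + k * ℓ := by
        unfold affRef
        rw [sum_eps_add]
        simp [eps, Pi.add_apply, hij.ne, hij.ne']
        ring
      rw [this]; exact ⟨k, Or.inr (by push_cast; ring)⟩
    · rcases eq_or_ne t j with htj | htj
      · rw [htj, Equiv.swap_apply_right]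
        have : affRef (eps i + eps j) (eps i + eps j) ((k:ℚ)*ℓ) x j = -(x i) + k * ℓ := by
          unfold affRef
          rw [sum_eps_add]
          simp [eps, Pi.add_apply, hij.ne, hij.ne']
          ring
        rw [this]; exact ⟨k, Or.inr (by push_cast; ring)⟩
      · rw [Equiv.swap_apply_of_ne_of_ne hti htj]
        have : affRef (eps i + eps j) (eps i + eps j) ((k:ℚ)*ℓ) x t = x t := by
          unfold affRef
          simp [eps, Pi.add_apply, hti, htj]
        rw [this]; exact relC_refl _ _
  · subst hf
    unfold invC
    apply Multiset.map_congr rfl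
    intro t _
    rw [clsC_eq_iff]
    have hgpos : 0 < Nat.gcd ℓ 2 := Nat.gcd_pos_of_pos_right ℓ (by norm_num)
    have hg : ((Nat.gcd ℓ 2 : ℕ) : ℚ) ≠ 0 := by exact_mod_cast hgpos.ne'
    obtain ⟨e, he⟩ : (Nat.gcd ℓ 2 : ℕ) ∣ 2 := Nat.gcd_dvd_right ℓ 2
    rcases eq_or_ne t i with hti | hti
    · rw [hti]
      have h2 : ((Nat.gcd ℓ 2 : ℕ) : ℚ) * (e : ℚ) = 2 := by exact_mod_cast he.symm
      have hc : 2 * ((k:ℚ) * ((ℓ:ℚ)/(Nat.gcd ℓ 2))) = ((k * e : ℤ):ℚ) * ℓ := by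
        push_cast
        field_simp
        linear_combination (-1) * (k:ℚ) * (ℓ:ℚ) * h2
      have hval : affRef ((2:ℚ) • eps i) (eps i) ((k:ℚ) * ((ℓ:ℚ)/(Nat.gcd ℓ 2))) x i
          = -(x i) + 2 * ((k:ℚ) * ((ℓ:ℚ)/(Nat.gcd ℓ 2))) := by
        unfold affRef
        rw [sum_eps]
        simp [eps, Pi.smul_apply]
        ring
      rw [hval, hc]
      exact ⟨k * e, Or.inr (by push_cast; ring)⟩
    · have : affRef ((2:ℚ) • eps i) (eps i) ((k:ℚ) * ((ℓ:ℚ)/(Nat.gcd ℓ 2))) x t = x t := by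
        unfold affRef
        simp [eps, Pi.smul_apply, hti]
      rw [this]; exact relC_refl _ _

lemma relC_int {ℓ : ℕ} {p q : ℤ} (h : relC ℓ (p:ℚ) (q:ℚ)) :
    ∃ k : ℤ, q = p + k*ℓ ∨ q = -p + k*ℓ := by
  obtain ⟨k, h | h⟩ := h
  · exact ⟨k, Or.inl (by exact_mod_cast h)⟩
  · exact ⟨k, Or.inr (by exact_mod_cast h)⟩

lemma dvd_of_odd_dvd_two_mul {ℓ : ℕ} {D : ℤ} (hodd : Odd ℓ) (h : (ℓ:ℤ) ∣ 2 * D) :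
    (ℓ:ℤ) ∣ D := by
  obtain ⟨r, hr⟩ := hodd
  have hℓ : (ℓ:ℤ) = 2*r + 1 := by exact_mod_cast hr
  have h1 : (ℓ:ℤ) ∣ ((r:ℤ)+1) * (2*D) := h.mul_left _
  have h2 : (ℓ:ℤ) ∣ (ℓ:ℤ) * D := Dvd.intro _ rfl
  have h3 : ((r:ℤ)+1) * (2*D) - (ℓ:ℤ)*D = D := by rw [hℓ]; ring
  calc (ℓ:ℤ) ∣ ((r:ℤ)+1) * (2*D) - (ℓ:ℤ)*D := dvd_sub h1 h2
    _ = D := h3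

end LinkageAux

/-- Type `C` linkage for two `e`-operators: if `λ`, `λ − ε_i` and `λ − ε_j` are dominant
with `i < j`, then `λ − ε_i` and `λ − ε_j` are linked under `W_ℓ` if and only if
`(λ+ρ)_i ≡ (λ+ρ)_j (mod ℓ)`. -/
theorem linked_e_e_typeC (N ℓ : ℕ) (hl : 0 < ℓ) (lam : Fin N → ℤ)
    (hlam : DominantC N lam) (i j : Fin N) (hij : i < j)
    (hmu : DominantC N (subE lam i)) (hnu : DominantC N (subE lam j)) :
    CLinked N ℓ (shiftC N (subE lam i)) (shiftC N (subE lam j)) ↔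
      (ℓ : ℤ) ∣ ((lam i + ((N : ℤ) - (i : ℕ))) - (lam j + ((N : ℤ) - (j : ℕ)))) := by
  set x := shiftC N (subE lam i) with hx
  set y := shiftC N (subE lam j) with hy
  have hijne : i ≠ j := hij.ne
  -- coordinates of x and y
  have hxi : x i = ((lam i + ((N:ℤ) - (i:ℕ)) - 1 : ℤ) : ℚ) := by
    show shiftC N (subE lam i) i = _
    unfold shiftC subE; simp only [if_pos rfl]; push_cast; ring
  have hxj : x j = ((lam j + ((N:ℤ) - (j:ℕ)) : ℤ) : ℚ) := by
    show shiftC N (subE lam i) j = _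
    unfold shiftC subE; simp only [if_neg hij.ne']; push_cast; ring
  have hyi : y i = ((lam i + ((N:ℤ) - (i:ℕ)) : ℤ) : ℚ) := by
    show shiftC N (subE lam j) i = _
    unfold shiftC subE; simp only [if_neg hij.ne]; push_cast; ring
  have hyj : y j = ((lam j + ((N:ℤ) - (j:ℕ)) - 1 : ℤ) : ℚ) := by
    show shiftC N (subE lam j) j = _
    unfold shiftC subE; simp only [if_pos rfl]; push_cast; ring
  have hinvgen : ∀ u v : Fin N → ℚ, CLinked N ℓ u v → invC N ℓ u = invC N ℓ v := by
    intro u v h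
    induction h with
    | rel u v h =>
      obtain ⟨f, hf, rfl⟩ := h
      exact (invC_step f hf u).symm
    | refl u => rfl
    | symm u v _ ih => exact ih.symm
    | trans u v w _ _ ih1 ih2 => exact ih1.trans ih2
  set A : ℤ := lam i + ((N:ℤ) - (i:ℕ)) with hA
  set B : ℤ := lam j + ((N:ℤ) - (j:ℕ)) with hB
  constructor
  · -- linked → congruent
    intro hCL
    have hinv : invC N ℓ x = invC N ℓ y := hinvgen x y hCL
    -- peel coordinates i and j off the multisets
    have hjmem : j ∈ Finset.univ.erase i := Finset.mem_erase.mpr ⟨hij.ne', Finset.mem_univ j⟩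
    have key : (Finset.univ : Finset (Fin N)).val
        = i ::ₘ j ::ₘ ((Finset.univ.erase i).erase j).val := by
      have e1 : (Finset.univ : Finset (Fin N)).val = i ::ₘ (Finset.univ.erase i).val := by
        rw [Finset.erase_val, Multiset.cons_erase (Finset.mem_val.mpr (Finset.mem_univ i))]
      have e2 : (Finset.univ.erase i).val = j ::ₘ ((Finset.univ.erase i).erase j).val := by
        rw [Finset.erase_val ((Finset.univ.erase i)) j,
          Multiset.cons_erase (Finset.mem_val.mpr hjmem)]
      rw [e1, e2]
    have hrest : Multiset.map (fun t => clsC ℓ (x t)) ((Finset.univ.erase i).erase j).val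
        = Multiset.map (fun t => clsC ℓ (y t)) ((Finset.univ.erase i).erase j).val := by
      apply Multiset.map_congr rfl
      intro t ht
      have ht' := Finset.mem_val.mp ht
      have htj : t ≠ j := (Finset.mem_erase.mp ht').1
      have hti : t ≠ i := (Finset.mem_erase.mp (Finset.mem_erase.mp ht').2).1
      have : x t = y t := by simp [hx, hy, shiftC, subE, hti, htj]
      rw [this]
    have heq : clsC ℓ (x i) ::ₘ clsC ℓ (x j)
          ::ₘ Multiset.map (fun t => clsC ℓ (y t)) ((Finset.univ.erase i).erase j).val
        = clsC ℓ (y i) ::ₘ clsC ℓ (y j)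
          ::ₘ Multiset.map (fun t => clsC ℓ (y t)) ((Finset.univ.erase i).erase j).val := by
      have := hinv
      unfold invC at this
      rw [key] at this
      simp only [Multiset.map_cons] at this
      rw [hrest] at this
      exact this
    -- extract the pair equality
    have hpair : (clsC ℓ (x i) = clsC ℓ (y i) ∧ clsC ℓ (x j) = clsC ℓ (y j)) ∨
        (clsC ℓ (x i) = clsC ℓ (y j) ∧ clsC ℓ (x j) = clsC ℓ (y i)) := by
      set R := Multiset.map (fun t => clsC ℓ (y t)) ((Finset.univ.erase i).erase j).val
      have h2 : ({clsC ℓ (x i), clsC ℓ (x j)} : Multiset (Set ℚ)) + R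
          = ({clsC ℓ (y i), clsC ℓ (y j)} : Multiset (Set ℚ)) + R := by
        simpa [Multiset.insert_eq_cons, Multiset.cons_add] using heq
      have h3 := add_right_cancel h2
      rw [Multiset.insert_eq_cons, Multiset.insert_eq_cons, Multiset.cons_eq_cons] at h3
      rcases h3 with ⟨h4, h5⟩ | ⟨hne, cs, h4, h5⟩
      · simp only [Multiset.singleton_inj] at h5
        exact Or.inl ⟨h4, h5⟩
      · rw [Multiset.singleton_eq_cons_iff] at h4 h5
        exact Or.inr ⟨h5.1.symm, h4.1⟩
    rw [hxi, hxj, hyi, hyj] at hpair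
    simp only [clsC_eq_iff] at hpair
    rcases hpair with ⟨h1, h2⟩ | ⟨h1, h2⟩
    · -- cls(A-1)=cls(A) and cls(B)=cls(B-1)
      obtain ⟨k, hk | hk⟩ := relC_int h1
      · -- A = A - 1 + kℓ : ℓ ∣ 1
        have : (ℓ:ℤ) ∣ 1 := ⟨k, by linarith⟩
        exact this.trans (one_dvd _)
      · -- 2A - 1 = kℓ
        obtain ⟨m, hm | hm⟩ := relC_int h2
        · have : (ℓ:ℤ) ∣ 1 := ⟨-m, by linarith⟩
          exact this.trans (one_dvd _)
        · -- 2B - 1 = mℓ ; so 2(A-B) = (k-m)ℓ, and ℓ must be odd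
          rcases Nat.even_or_odd ℓ with hev | hodd
          · exfalso
            have hevz : Even ((ℓ:ℤ)) := (Int.even_coe_nat ℓ).mpr hev
            have : Even ((k:ℤ) * ℓ) := hevz.mul_left k
            obtain ⟨r, hr⟩ := this
            have h2A : 2 * A - 1 = 2 * r := by linarith
            omega
          · apply dvd_of_odd_dvd_two_mul hodd
            exact ⟨k - m, by linarith⟩
    · -- cls(A-1)=cls(B-1) and cls(B)=cls(A)
      obtain ⟨k, hk | hk⟩ := relC_int h1
      · -- B - 1 = A - 1 + kℓ
        exact ⟨-k, by linarith⟩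
      · -- A + B = 2 + kℓ
        obtain ⟨m, hm | hm⟩ := relC_int h2
        · -- A = B + mℓ
          exact ⟨m, by linarith⟩
        · -- A + B = mℓ ; then ℓ ∣ 2 and ℓ ∣ A+B
          have hd2 : (ℓ:ℤ) ∣ 2 := ⟨m - k, by linarith⟩
          have hdAB : (ℓ:ℤ) ∣ A + B := ⟨m, by linarith⟩
          have : A - B = (A + B) - 2 * B := by ring
          rw [this]
          exact dvd_sub hdAB (hd2.mul_right B)
  · -- congruent → linked
    rintro ⟨k, hk⟩
    set f := affRef (eps i - eps j) (eps i - eps j) ((k:ℚ) * ℓ) with hf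
    have hfx : y = f x := by
      funext t
      have hsum : (∑ s, x s * (eps i - eps j) s) = x i - x j := sum_eps_sub x i j
      have hAB : ((A:ℚ) - B) = (k:ℚ) * ℓ := by
        have h : A - B = k * ℓ := by linarith
        exact_mod_cast h
      have hdiff : x i - x j - (k:ℚ) * ℓ = -1 := by
        rw [hxi, hxj, ← hAB]; push_cast; ring
      show y t = affRef (eps i - eps j) (eps i - eps j) ((k:ℚ) * ℓ) x t
      unfold affRef
      rw [hsum, hdiff]
      rcases eq_or_ne t i with hti | hti
      · rw [hti]
        have : (eps i - eps j) i = 1 := by simp [eps, Pi.sub_apply, hij.ne]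
        rw [this, hyi, hxi]; push_cast; ring
      · rcases eq_or_ne t j with htj | htj
        · rw [htj]
          have : (eps i - eps j) j = -1 := by simp [eps, Pi.sub_apply, hij.ne']
          rw [this, hyj, hxj]; push_cast; ring
        · have : (eps i - eps j) t = 0 := by simp [eps, Pi.sub_apply, hti, htj]
          rw [this]
          have : x t = y t := by simp [hx, hy, shiftC, subE, hti, htj]
          rw [← this]; ring
    exact Relation.EqvGen.rel x y ⟨f, Or.inl ⟨i, j, k, hij, Or.inl rfl⟩, hfx⟩
end

section
/- Type C linkage for mixed operators: let λ+ρ be a strictly decreasing sequence of positive integers, and suppose μ = λ − ε_i and ν = λ + ε_j are dominant with i ≠ j. Then μ and ν are linked (their ρ-shifts are in the same W_ℓ-orbit) if and only if (λ+ρ)_i ≡ −(λ+ρ)_j (mod ℓ). -/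
/-!
Every generator of `W_ℓ` acts on `ℚ^N` as a signed permutation of the coordinates followed by a
translation in `ℓ ℤ^N` (for a long root `2ε_i` the translation is `2kℓ / gcd(ℓ, 2) ∈ ℓℤ`), so the
multiset of the pairs `{x_t, -x_t} mod ℓ` is constant on orbits. With `c = λ + ρ`, the two weights
differ only at `i` and `j`, and the resulting equation of multisets
`{c_i - 1, -(c_i - 1), c_j, -c_j} = {c_i, -c_i, c_j + 1, -(c_j + 1)}` in `ℤ/ℓ` forces
`c_i + c_j ≡ 0`. Conversely, if `c_i + c_j = kℓ`, the reflection `s_{ε_i+ε_j, k}` maps one weight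
to the other.
-/

section Reflections

variable {N : ℕ}

lemma affRef_eq_sub_smul (α αv : Fin N → ℚ) (c : ℚ) (x : Fin N → ℚ) :
    affRef α αv c x = x - ((∑ s, x s * αv s) - c) • α :=
  rfl

variable (x : Fin N → ℚ) (c : ℚ) {i j : Fin N}

lemma affRef_sub_apply_left (hij : i ≠ j) :
    affRef (eps i - eps j) (eps i - eps j) c x i = x j + c := by
  simp only [affRef, Pi.sub_apply, eps, mul_sub, mul_ite, mul_one, mul_zero,
    Finset.sum_sub_distrib, Finset.sum_ite_eq', Finset.mem_univ, ↓reduceIte, hij, sub_zero]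
  ring

lemma affRef_sub_apply_right (hij : i ≠ j) :
    affRef (eps i - eps j) (eps i - eps j) c x j = x i - c := by
  simp only [affRef, Pi.sub_apply, eps, mul_sub, mul_ite, mul_one, mul_zero,
    Finset.sum_sub_distrib, Finset.sum_ite_eq', Finset.mem_univ, ↓reduceIte, hij.symm, zero_sub]
  ring

lemma affRef_sub_apply_of_ne {t : Fin N} (hti : t ≠ i) (htj : t ≠ j) :
    affRef (eps i - eps j) (eps i - eps j) c x t = x t := by
  simp [affRef, eps, hti, htj]

lemma affRef_add_apply_left (hij : i ≠ j) :
    affRef (eps i + eps j) (eps i + eps j) c x i = -x j + c := by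
  simp only [affRef, Pi.add_apply, eps, mul_add, mul_ite, mul_one, mul_zero,
    Finset.sum_add_distrib, Finset.sum_ite_eq', Finset.mem_univ, ↓reduceIte, hij, add_zero]
  ring

lemma affRef_add_apply_right (hij : i ≠ j) :
    affRef (eps i + eps j) (eps i + eps j) c x j = -x i + c := by
  simp only [affRef, Pi.add_apply, eps, mul_add, mul_ite, mul_one, mul_zero,
    Finset.sum_add_distrib, Finset.sum_ite_eq', Finset.mem_univ, ↓reduceIte, hij.symm, zero_add]
  ring

lemma affRef_add_apply_of_ne {t : Fin N} (hti : t ≠ i) (htj : t ≠ j) :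
    affRef (eps i + eps j) (eps i + eps j) c x t = x t := by
  simp [affRef, eps, hti, htj]

lemma affRef_long_apply_self : affRef ((2 : ℚ) • eps i) (eps i) c x i = -x i + 2 * c := by
  simp only [affRef, eps, mul_ite, mul_one, mul_zero, Finset.sum_ite_eq', Finset.mem_univ,
    ↓reduceIte, Pi.smul_apply, smul_eq_mul]
  ring

lemma affRef_long_apply_of_ne {t : Fin N} (hti : t ≠ i) :
    affRef ((2 : ℚ) • eps i) (eps i) c x t = x t := by
  simp [affRef, eps, hti]

end Reflections

lemma exists_two_mul_div_gcd_two (ℓ : ℕ) : ∃ m : ℤ, 2 * ((ℓ : ℚ) / Nat.gcd ℓ 2) = m * ℓ := by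
  rcases (Nat.dvd_prime Nat.prime_two).mp (Nat.gcd_dvd_right ℓ 2) with h | h <;>
    rw [h]
  · exact ⟨2, by push_cast; ring⟩
  · exact ⟨1, by push_cast; ring⟩

section Invariant

variable (ℓ : ℕ)

/-- `x mod ℓ` for integral `x`; the junk value `0` off `ℤ` is harmless, since `x + m` is
integral exactly when `x` is. -/
def intResidue (x : ℚ) : ZMod ℓ :=
  if x.den = 1 then (x.num : ZMod ℓ) else 0

@[simp]
lemma intResidue_intCast (n : ℤ) : intResidue ℓ n = n := by
  simp [intResidue]

lemma intResidue_add_intCast_of_dvd (x : ℚ) {m : ℤ} (hm : (ℓ : ℤ) ∣ m) :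
    intResidue ℓ (x + m) = intResidue ℓ x := by
  by_cases hx : x.den = 1
  · rw [← Rat.coe_int_num_of_den_eq_one hx, ← Int.cast_add, intResidue_intCast,
      intResidue_intCast, Int.cast_add, (ZMod.intCast_zmod_eq_zero_iff_dvd m ℓ).mpr hm, add_zero]
  · simp [intResidue, hx]

def residuePair (x : ℚ) : Multiset (ZMod ℓ) := {intResidue ℓ x, intResidue ℓ (-x)}

lemma residuePair_neg (x : ℚ) : residuePair ℓ (-x) = residuePair ℓ x := by
  rw [residuePair, residuePair, neg_neg, Multiset.pair_comm]

lemma residuePair_add_mul (x : ℚ) (k : ℤ) : residuePair ℓ (x + k * ℓ) = residuePair ℓ x := by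
  have hk : (ℓ : ℤ) ∣ k * ℓ := dvd_mul_left _ _
  rw [residuePair, residuePair, show x + k * ℓ = x + ((k * ℓ : ℤ) : ℚ) by push_cast; rfl,
    intResidue_add_intCast_of_dvd ℓ x hk, neg_add,
    ← Int.cast_neg, intResidue_add_intCast_of_dvd ℓ _ hk.neg_right]

lemma residuePair_intCast (n : ℤ) : residuePair ℓ n = {(n : ZMod ℓ), -(n : ZMod ℓ)} := by
  rw [residuePair, ← Int.cast_neg, intResidue_intCast, intResidue_intCast, Int.cast_neg]

def residueInvariant {N : ℕ} (x : Fin N → ℚ) : Multiset (ZMod ℓ) := ∑ t, residuePair ℓ (x t)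

variable {ℓ}

lemma residueInvariant_eq_of_perm {N : ℕ} {x y : Fin N → ℚ} (σ : Equiv.Perm (Fin N))
    (h : ∀ t, residuePair ℓ (y t) = residuePair ℓ (x (σ t))) :
    residueInvariant ℓ y = residueInvariant ℓ x := by
  simp only [residueInvariant, h]
  exact Equiv.sum_comp σ fun t => residuePair ℓ (x t)

lemma IsCRef.residueInvariant_eq {N : ℕ} {f : (Fin N → ℚ) → (Fin N → ℚ)} (hf : IsCRef N ℓ f)
    (x : Fin N → ℚ) : residueInvariant ℓ (f x) = residueInvariant ℓ x := by
  rcases hf with ⟨i, j, k, hij, rfl | rfl⟩ | ⟨i, k, rfl⟩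
  · refine residueInvariant_eq_of_perm (Equiv.swap i j) fun t => ?_
    rcases eq_or_ne t i with rfl | hti
    · rw [affRef_sub_apply_left _ _ hij.ne, Equiv.swap_apply_left, residuePair_add_mul]
    rcases eq_or_ne t j with rfl | htj
    · rw [affRef_sub_apply_right _ _ hij.ne, Equiv.swap_apply_right, sub_eq_add_neg,
        ← neg_mul, ← Int.cast_neg, residuePair_add_mul]
    · rw [affRef_sub_apply_of_ne _ _ hti htj, Equiv.swap_apply_of_ne_of_ne hti htj]
  · refine residueInvariant_eq_of_perm (Equiv.swap i j) fun t => ?_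
    rcases eq_or_ne t i with rfl | hti
    · rw [affRef_add_apply_left _ _ hij.ne, Equiv.swap_apply_left, residuePair_add_mul,
        residuePair_neg]
    rcases eq_or_ne t j with rfl | htj
    · rw [affRef_add_apply_right _ _ hij.ne, Equiv.swap_apply_right, residuePair_add_mul,
        residuePair_neg]
    · rw [affRef_add_apply_of_ne _ _ hti htj, Equiv.swap_apply_of_ne_of_ne hti htj]
  · refine residueInvariant_eq_of_perm 1 fun t => ?_
    rcases eq_or_ne t i with rfl | hti
    · obtain ⟨m, hm⟩ := exists_two_mul_div_gcd_two ℓ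
      rw [affRef_long_apply_self, mul_left_comm, hm, ← mul_assoc, ← Int.cast_mul,
        residuePair_add_mul, residuePair_neg, Equiv.Perm.one_apply]
    · rw [affRef_long_apply_of_ne _ _ hti, Equiv.Perm.one_apply]

lemma CLinked.residueInvariant_eq {N : ℕ} {x y : Fin N → ℚ} (h : CLinked N ℓ x y) :
    residueInvariant ℓ x = residueInvariant ℓ y := by
  induction h with
  | rel u v huv => obtain ⟨f, hf, rfl⟩ := huv; exact (hf.residueInvariant_eq u).symm
  | refl u => rfl
  | symm u v _ ih => exact ih.symm
  | trans u v w _ _ ih₁ ih₂ => exact ih₁.trans ih₂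

end Invariant

lemma add_eq_zero_of_pair_add_pair_eq {R : Type*} [CommRing R] {a b : R}
    (h : ({a - 1, -(a - 1)} : Multiset R) + {b, -b} = {a, -a} + {b + 1, -(b + 1)}) :
    a + b = 0 := by
  have h₁ : a - 1 ∈ ({a, -a} : Multiset R) + {b + 1, -(b + 1)} := by rw [← h]; simp
  have h₂ : -a ∈ ({a - 1, -(a - 1)} : Multiset R) + {b, -b} := by rw [h]; simp
  have h₃ : b ∈ ({a, -a} : Multiset R) + {b + 1, -(b + 1)} := by rw [← h]; simp
  have h₄ : b + 1 ∈ ({a - 1, -(a - 1)} : Multiset R) + {b, -b} := by rw [h]; simp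
  simp only [Multiset.mem_add, Multiset.insert_eq_cons, Multiset.mem_cons,
    Multiset.mem_singleton, or_assoc] at h₁ h₂ h₃ h₄
  rcases h₁ with e₁ | e₁ | e₁ | e₁
  · linear_combination -(a + b) * e₁
  · rcases h₃ with e₃ | e₃ | e₃ | e₃
    · rcases h₄ with e₄ | e₄ | e₄ | e₄
      · linear_combination a * e₄ + (1 - a) * e₃
      · linear_combination e₄
      · linear_combination (a + b) * e₄
      · linear_combination a * e₄ - b * e₁
    · linear_combination e₃
    · linear_combination -(a + b) * e₃
    · linear_combination a * e₃ - b * e₁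
  · rcases h₂ with e₂ | e₂ | e₂ | e₂
    · rcases h₃ with e₃ | e₃ | e₃ | e₃
      · linear_combination (a + b) * e₂ - (a + b) * a * e₁ - (a + b) * a * e₃
      · linear_combination e₃
      · linear_combination -(a + b) * e₃
      · linear_combination b * e₂ + a * e₃
    · linear_combination -(a + b) * e₂
    · linear_combination -e₂
    · linear_combination -b * e₁ - (b + 1) * e₂
  · linear_combination e₁

lemma isCRef_affRef_add {N : ℕ} (ℓ : ℕ) {i j : Fin N} (hij : i ≠ j) (k : ℤ) :
    IsCRef N ℓ (affRef (eps i + eps j) (eps i + eps j) (k * ℓ)) := by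
  rcases hij.lt_or_gt with h | h
  · exact Or.inl ⟨i, j, k, h, Or.inr rfl⟩
  · exact Or.inl ⟨j, i, k, h, Or.inr (by rw [add_comm])⟩

lemma add_eq_add_of_sum_eq {ι M : Type*} [Fintype ι] [DecidableEq ι] [AddCancelCommMonoid M]
    {f g : ι → M} {i j : ι} (hij : i ≠ j) (hsum : ∑ t, f t = ∑ t, g t)
    (hrest : ∀ t, t ≠ i → t ≠ j → f t = g t) : f i + f j = g i + g j := by
  have hcompl : ∑ t ∈ {i, j}ᶜ, f t = ∑ t ∈ {i, j}ᶜ, g t :=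
    Finset.sum_congr rfl fun t ht => by
      simp only [Finset.mem_compl, Finset.mem_insert, Finset.mem_singleton, not_or] at ht
      exact hrest t ht.1 ht.2
  rw [← Finset.sum_pair hij, ← Finset.sum_pair hij]
  apply add_right_cancel (b := ∑ t ∈ {i, j}ᶜ, f t)
  rw [Finset.sum_add_sum_compl, hcompl, Finset.sum_add_sum_compl, hsum]

theorem cLinked_sub_eps_add_eps_iff {N ℓ : ℕ} (c : Fin N → ℤ) {i j : Fin N} (hij : i ≠ j) :
    CLinked N ℓ ((fun t => (c t : ℚ)) - eps i) ((fun t => (c t : ℚ)) + eps j) ↔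
      (ℓ : ℤ) ∣ c i + c j := by
  set x : Fin N → ℚ := (fun t => (c t : ℚ)) - eps i
  set y : Fin N → ℚ := (fun t => (c t : ℚ)) + eps j
  constructor
  · intro h
    have hpairs := add_eq_add_of_sum_eq hij h.residueInvariant_eq fun t hti htj => by
      simp [x, y, eps, hti, htj]
    have hxi : x i = ((c i - 1 : ℤ) : ℚ) := by simp [x, eps]
    have hxj : x j = c j := by simp [x, eps, hij.symm]
    have hyi : y i = c i := by simp [y, eps, hij]
    have hyj : y j = ((c j + 1 : ℤ) : ℚ) := by simp [y, eps]
    rw [hxi, hxj, hyi, hyj, residuePair_intCast, residuePair_intCast, residuePair_intCast,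
      residuePair_intCast, Int.cast_sub, Int.cast_add, Int.cast_one] at hpairs
    rw [← ZMod.intCast_zmod_eq_zero_iff_dvd, Int.cast_add]
    exact add_eq_zero_of_pair_add_pair_eq hpairs
  · rintro ⟨k, hk⟩
    refine Relation.EqvGen.rel _ _ ⟨_, isCRef_affRef_add ℓ hij k, ?_⟩
    have hinner : ∑ s, x s * (eps i + eps j) s - k * ℓ = -1 := by
      have hk' : (c i : ℚ) + c j = ℓ * k := by exact_mod_cast hk
      simp only [x, Pi.sub_apply, eps, Pi.add_apply, mul_add, mul_ite, mul_one, mul_zero,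
        Finset.sum_add_distrib, Finset.sum_ite_eq', Finset.mem_univ, ↓reduceIte, hij.symm,
        sub_zero]
      linarith
    rw [affRef_eq_sub_smul, hinner, neg_one_smul, sub_neg_eq_add]
    simp only [x, y]
    abel

lemma shiftC_subE {N : ℕ} (lam : Fin N → ℤ) (i : Fin N) :
    shiftC N (subE lam i) = shiftC N lam - eps i := by
  funext t
  simp only [shiftC, subE, eps, Pi.sub_apply]
  split_ifs <;> push_cast <;> ring

lemma shiftC_addE {N : ℕ} (lam : Fin N → ℤ) (i : Fin N) :
    shiftC N (addE lam i) = shiftC N lam + eps i := by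
  funext t
  simp only [shiftC, addE, eps, Pi.add_apply]
  split_ifs <;> push_cast <;> ring

lemma shiftC_eq_intCast {N : ℕ} (lam : Fin N → ℤ) :
    shiftC N lam = fun t => ((lam t + ((N : ℤ) - (t : ℕ)) : ℤ) : ℚ) := by
  funext t
  push_cast [shiftC]
  rfl

theorem linked_e_f_typeC_general (N ℓ : ℕ) (lam : Fin N → ℤ) (i j : Fin N) (hij : i ≠ j) :
    CLinked N ℓ (shiftC N (subE lam i)) (shiftC N (addE lam j)) ↔
      (ℓ : ℤ) ∣ ((lam i + ((N : ℤ) - (i : ℕ))) + (lam j + ((N : ℤ) - (j : ℕ)))) := by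
  rw [shiftC_subE, shiftC_addE, shiftC_eq_intCast]
  exact cLinked_sub_eps_add_eps_iff _ hij

/-- Type `C` linkage for mixed operators: if `λ`, `μ = λ − ε_i` and `ν = λ + ε_j` are
dominant with `i ≠ j`, then `μ` and `ν` are linked under `W_ℓ` if and only if
`(λ+ρ)_i ≡ −(λ+ρ)_j (mod ℓ)`. -/
theorem linked_e_f_typeC (N ℓ : ℕ) (hl : 0 < ℓ) (lam : Fin N → ℤ)
    (hlam : DominantC N lam) (i j : Fin N) (hij : i ≠ j)
    (hmu : DominantC N (subE lam i)) (hnu : DominantC N (addE lam j)) :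
    CLinked N ℓ (shiftC N (subE lam i)) (shiftC N (addE lam j)) ↔
      (ℓ : ℤ) ∣ ((lam i + ((N : ℤ) - (i : ℕ))) + (lam j + ((N : ℤ) - (j : ℕ)))) :=
  linked_e_f_typeC_general N ℓ lam i j hij
end

section
/- Type C linkage at the origin, ℓ even: let ℓ > 3 be even, λ+ρ strictly decreasing positive integers, and suppose both μ = λ − ε_i and ν = λ + ε_i are dominant. Then μ and ν are linked under W_ℓ if and only if (λ+ρ)_i ≡ 0 (mod ℓ/2). -/
/-!
`W_ℓ` acts on coordinates by signed permutations followed by translations in `ℓ ℤ^N`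
(for the long roots `2ε_i` the step `ℓ_α = ℓ / 2` is exactly compensated by the factor `2`).
Hence the multiset of the classes of the coordinates in `ℚ / ℓℤ` modulo sign is a linkage
invariant. Since `λ − ε_i + ρ` and `λ + ε_i + ρ` differ only in the coordinate `i`, where they
are `a − 1` and `a + 1` with `a = (λ+ρ)_i`, linkage forces `a + 1 ≡ ±(a − 1) (mod ℓ)`; the sign `+`
is excluded by `ℓ > 2`, and the sign `−` says `2a ≡ 0 (mod ℓ)`. Conversely, if `ℓ / 2 ∣ a`, the
single reflection `s_{2ε_i, k}` with `k ℓ / 2 = a` maps `a − 1` to `a + 1`.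
-/

open Finset

section Reflections

variable {N : ℕ}

lemma sum_mul_eps (x : Fin N → ℚ) (i : Fin N) : ∑ s, x s * eps i s = x i := by
  simp [eps]

lemma affRef_eps_sub_eps_apply {i j : Fin N} (hij : i ≠ j) (c : ℚ) (x : Fin N → ℚ)
    (t : Fin N) :
    affRef (eps i - eps j) (eps i - eps j) c x t =
      if t = i then x j + c else if t = j then x i - c else x t := by
  simp only [affRef, Pi.sub_apply, mul_sub, sum_sub_distrib, sum_mul_eps]
  simp only [eps]
  split_ifs <;> simp_all <;> ring

lemma affRef_eps_add_eps_apply {i j : Fin N} (hij : i ≠ j) (c : ℚ) (x : Fin N → ℚ)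
    (t : Fin N) :
    affRef (eps i + eps j) (eps i + eps j) c x t =
      if t = i then c - x j else if t = j then c - x i else x t := by
  simp only [affRef, Pi.add_apply, mul_add, sum_add_distrib, sum_mul_eps]
  simp only [eps]
  split_ifs <;> simp_all <;> ring

lemma affRef_two_smul_eps_apply (i : Fin N) (c : ℚ) (x : Fin N → ℚ) (t : Fin N) :
    affRef ((2 : ℚ) • eps i) (eps i) c x t = if t = i then 2 * c - x i else x t := by
  simp only [affRef, sum_mul_eps, Pi.smul_apply, smul_eq_mul]
  simp only [eps]
  split_ifs <;> simp_all
  ring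

lemma cast_gcd_two_of_even {ℓ : ℕ} (heven : Even ℓ) : ((Nat.gcd ℓ 2 : ℕ) : ℚ) = 2 := by
  rw [Nat.gcd_eq_right heven.two_dvd, Nat.cast_ofNat]

end Reflections

section SignedClass

def signedClass (L q : ℚ) : Set ℚ := {q' | ∃ m : ℤ, q' = q + m * L ∨ q' = -q + m * L}

variable (L : ℚ)

lemma mem_signedClass_self (q : ℚ) : q ∈ signedClass L q := ⟨0, Or.inl (by simp)⟩

lemma signedClass_add_intCast_mul (q : ℚ) (k : ℤ) :
    signedClass L (q + k * L) = signedClass L q := by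
  ext q'
  constructor
  · rintro ⟨m, h | h⟩
    · exact ⟨m + k, Or.inl (by push_cast; linarith)⟩
    · exact ⟨m - k, Or.inr (by push_cast; linarith)⟩
  · rintro ⟨m, h | h⟩
    · exact ⟨m - k, Or.inl (by push_cast; linarith)⟩
    · exact ⟨m + k, Or.inr (by push_cast; linarith)⟩

lemma signedClass_neg (q : ℚ) : signedClass L (-q) = signedClass L q := by
  ext q'
  constructor <;> rintro ⟨m, h | h⟩
  · exact ⟨m, Or.inr h⟩
  · exact ⟨m, Or.inl (by rw [h, neg_neg])⟩
  · exact ⟨m, Or.inr (by rw [h, neg_neg])⟩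
  · exact ⟨m, Or.inl h⟩

lemma signedClass_intCast_mul_sub (q : ℚ) (k : ℤ) :
    signedClass L (k * L - q) = signedClass L q := by
  rw [sub_eq_neg_add, signedClass_add_intCast_mul, signedClass_neg]

lemma dvd_of_signedClass_sub_one_eq (ℓ : ℕ) (heven : Even ℓ) (hl : 2 < ℓ) (a : ℤ)
    (h : signedClass ℓ (a - 1) = signedClass ℓ (a + 1)) : ((ℓ / 2 : ℕ) : ℤ) ∣ a := by
  obtain ⟨M, rfl⟩ := heven
  rw [show (M + M) / 2 = M by omega]
  obtain ⟨m, hm | hm⟩ := h ▸ mem_signedClass_self _ ((a : ℚ) + 1)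
  · have hq : ((m * ((M + M : ℕ) : ℤ) : ℤ) : ℚ) = (2 : ℤ) := by push_cast at hm ⊢; linarith
    have hdvd : ((M + M : ℕ) : ℤ) ∣ 2 := ⟨m, by rw [mul_comm]; exact_mod_cast hq.symm⟩
    have := Int.le_of_dvd two_pos hdvd
    omega
  · exact ⟨m, by exact_mod_cast (by push_cast at hm ⊢; linarith : (a : ℚ) = M * m)⟩

end SignedClass

section Invariant

variable {N : ℕ}

def signedClasses (L : ℚ) (x : Fin N → ℚ) : Multiset (Set ℚ) :=
  univ.val.map fun t => signedClass L (x t)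

lemma signedClasses_eq_of_perm {L : ℚ} {x y : Fin N → ℚ} (σ : Equiv.Perm (Fin N))
    (h : ∀ t, signedClass L (y t) = signedClass L (x (σ t))) :
    signedClasses L y = signedClasses L x := by
  have hy : (fun t => signedClass L (y t)) = (fun t => signedClass L (x t)) ∘ σ := funext h
  rw [signedClasses, hy, ← Multiset.map_map, Multiset.map_univ_val_equiv, signedClasses]

lemma signedClass_eq_of_signedClasses_eq {L : ℚ} {x y : Fin N → ℚ} {i : Fin N}
    (h : signedClasses L x = signedClasses L y) (hoff : ∀ t ≠ i, x t = y t) :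
    signedClass L (x i) = signedClass L (y i) := by
  have hsplit : ∀ z : Fin N → ℚ, signedClasses L z =
      signedClass L (z i) ::ₘ (univ.erase i).val.map fun t => signedClass L (z t) := by
    intro z
    rw [signedClasses, ← Multiset.cons_erase (mem_univ_val i), Multiset.map_cons, erase_val]
  have hrest : ((univ.erase i).val.map fun t => signedClass L (x t)) =
      (univ.erase i).val.map fun t => signedClass L (y t) :=
    Multiset.map_congr rfl fun t ht => by rw [hoff t (mem_erase.mp (mem_val.mp ht)).1]
  rw [hsplit x, hsplit y, hrest] at h
  exact (Multiset.cons_inj_left _).mp h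

lemma signedClasses_isCRef {ℓ : ℕ} (heven : Even ℓ) {f : (Fin N → ℚ) → Fin N → ℚ}
    (hf : IsCRef N ℓ f) (x : Fin N → ℚ) : signedClasses ℓ (f x) = signedClasses ℓ x := by
  obtain ⟨i, j, k, hij, rfl | rfl⟩ | ⟨i, k, rfl⟩ := hf
  · refine signedClasses_eq_of_perm (Equiv.swap i j) fun t => ?_
    rw [affRef_eps_sub_eps_apply hij.ne, Equiv.swap_apply_def]
    split_ifs
    · exact signedClass_add_intCast_mul _ _ _
    · rw [sub_eq_add_neg, ← neg_mul, ← Int.cast_neg, signedClass_add_intCast_mul]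
    · rfl
  · refine signedClasses_eq_of_perm (Equiv.swap i j) fun t => ?_
    rw [affRef_eps_add_eps_apply hij.ne, Equiv.swap_apply_def]
    split_ifs
    · exact signedClass_intCast_mul_sub _ _ _
    · exact signedClass_intCast_mul_sub _ _ _
    · rfl
  · refine signedClasses_eq_of_perm (Equiv.refl _) fun t => ?_
    rw [affRef_two_smul_eps_apply, cast_gcd_two_of_even heven, Equiv.refl_apply]
    split_ifs with ht
    · rw [ht, show 2 * (k * ((ℓ : ℚ) / 2)) = k * ℓ by ring, signedClass_intCast_mul_sub]
    · rfl

lemma signedClasses_eq_of_cLinked {ℓ : ℕ} (heven : Even ℓ) {x y : Fin N → ℚ}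
    (h : CLinked N ℓ x y) : signedClasses ℓ x = signedClasses ℓ y := by
  induction h with
  | rel u v huv =>
    obtain ⟨f, hf, rfl⟩ := huv
    exact (signedClasses_isCRef heven hf u).symm
  | refl => rfl
  | symm _ _ _ ih => exact ih.symm
  | trans _ _ _ _ _ ih₁ ih₂ => exact ih₁.trans ih₂

end Invariant

section Shift

variable {N : ℕ} (lam : Fin N → ℤ) (i : Fin N)

lemma shiftC_subE_self :
    shiftC N (subE lam i) i = ((lam i + ((N : ℤ) - (i : ℕ)) : ℤ) : ℚ) - 1 := by
  simp [shiftC, subE]; ring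

lemma shiftC_addE_self :
    shiftC N (addE lam i) i = ((lam i + ((N : ℤ) - (i : ℕ)) : ℤ) : ℚ) + 1 := by
  simp [shiftC, addE]; ring

lemma shiftC_subE_of_ne {t : Fin N} (ht : t ≠ i) :
    shiftC N (subE lam i) t = shiftC N (addE lam i) t := by
  simp [shiftC, subE, addE, ht]

end Shift

theorem linked_e_f_same_typeC_even_general (N ℓ : ℕ) (heven : Even ℓ) (hl : 3 < ℓ)
    (lam : Fin N → ℤ) (i : Fin N) :
    CLinked N ℓ (shiftC N (subE lam i)) (shiftC N (addE lam i)) ↔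
      ((ℓ / 2 : ℕ) : ℤ) ∣ (lam i + ((N : ℤ) - (i : ℕ))) := by
  constructor
  · intro hlink
    have hcls := signedClass_eq_of_signedClasses_eq (signedClasses_eq_of_cLinked heven hlink)
      fun t ht => shiftC_subE_of_ne lam i ht
    rw [shiftC_subE_self, shiftC_addE_self] at hcls
    exact dvd_of_signedClass_sub_one_eq ℓ heven (by omega) _ hcls
  · rintro ⟨m, hm⟩
    have hhalf : ((ℓ / 2 : ℕ) : ℚ) = (ℓ : ℚ) / 2 := Nat.cast_div_charZero heven.two_dvd
    refine Relation.EqvGen.rel _ _ ⟨_, Or.inr ⟨i, m, rfl⟩, funext fun t => ?_⟩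
    rw [affRef_two_smul_eps_apply]
    split_ifs with ht
    · rw [ht, shiftC_subE_self, shiftC_addE_self, hm, cast_gcd_two_of_even heven, Int.cast_mul,
        Int.cast_natCast, hhalf]
      ring
    · exact (shiftC_subE_of_ne lam i ht).symm

/-- Type `C` linkage at the origin, `ℓ` even: if `ℓ > 3` is even and `λ`, `μ = λ − ε_i`,
`ν = λ + ε_i` are dominant, then `μ` and `ν` are linked under `W_ℓ` if and only if
`(λ+ρ)_i ≡ 0 (mod ℓ/2)`. -/
theorem linked_e_f_same_typeC_even (N ℓ : ℕ) (heven : Even ℓ) (hl : 3 < ℓ)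
    (lam : Fin N → ℤ) (hlam : DominantC N lam) (i : Fin N)
    (hmu : DominantC N (subE lam i)) (hnu : DominantC N (addE lam i)) :
    CLinked N ℓ (shiftC N (subE lam i)) (shiftC N (addE lam i)) ↔
      ((ℓ / 2 : ℕ) : ℤ) ∣ (lam i + ((N : ℤ) - (i : ℕ))) :=
  linked_e_f_same_typeC_even_general N ℓ heven hl lam i
end

section
/- Type B self-linkage, ℓ even, half-integer-shift weights: let ℓ > 3 be even and λ ∈ X^{1/2,+} (so the entries of λ+ρ lie in ℤ + 1/2), and suppose μ = λ − ε_i is dominant. Then μ and λ are linked under W_ℓ if and only if (λ+ρ)_i − 1/2 ≡ 0 (mod ℓ/2). -/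
/-- The affine reflections generating `W_ℓ` in type `B_N`: the long roots are
`ε_i ± ε_j` (`i < j`, coroot equal to the root, `d = 2`, so `ℓ_α = ℓ / gcd(ℓ,2)`)
and the short roots are `ε_i` (coroot `2ε_i`, `d = 1`, so `ℓ_α = ℓ`). -/
def IsBRef (N ℓ : ℕ) (f : (Fin N → ℚ) → (Fin N → ℚ)) : Prop :=
  (∃ i j : Fin N, ∃ k : ℤ, i < j ∧
    (f = affRef (eps i - eps j) (eps i - eps j) ((k : ℚ) * ((ℓ : ℚ) / (Nat.gcd ℓ 2))) ∨
     f = affRef (eps i + eps j) (eps i + eps j) ((k : ℚ) * ((ℓ : ℚ) / (Nat.gcd ℓ 2))))) ∨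
  (∃ i : Fin N, ∃ k : ℤ, f = affRef (eps i) ((2 : ℚ) • eps i) ((k : ℚ) * ℓ))

/-- Two (ρ-shifted) weights are linked in type `B_N` if they lie in the same orbit of
the group generated by the affine reflections of `W_ℓ`. -/
def BLinked (N ℓ : ℕ) (x y : Fin N → ℚ) : Prop :=
  Relation.EqvGen (fun u v => ∃ f, IsBRef N ℓ f ∧ v = f u) x y

/-- Dominant weights of type `B_N`: weakly decreasing non-negative tuples. -/
def DominantB (N : ℕ) (lam : Fin N → ℚ) : Prop :=
  (∀ s t : Fin N, s ≤ t → lam t ≤ lam s) ∧ ∀ t, 0 ≤ lam t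

/-- `λ − ε_i`. -/
def subEQ {N : ℕ} (lam : Fin N → ℚ) (i : Fin N) : Fin N → ℚ :=
  fun t => lam t - if t = i then 1 else 0

/-- The ρ-shift in type `B_N`: `ρ = (N−1/2, N−3/2, …, 1/2)`, so (0-indexed)
`(λ+ρ)_t = λ_t + (N − t − 1/2)`. -/
def shiftB (N : ℕ) (lam : Fin N → ℚ) : Fin N → ℚ :=
  fun t => lam t + ((N : ℚ) - ((t : ℕ) : ℚ) - 1/2)

namespace BLaux

def HalfOdd (q : ℚ) : Prop := ∃ z : ℤ, q = (z : ℚ) + 1/2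

def GoodV {N : ℕ} (x : Fin N → ℚ) : Prop := ∀ t, HalfOdd (x t)

def RB (L a b : ℚ) : Prop := ∃ k : ℤ, a = b + (k:ℚ) * L ∨ a = -b + (k:ℚ) * L

lemma RB_refl (L a : ℚ) : RB L a a := ⟨0, Or.inl (by push_cast; ring)⟩

lemma RB_symm {L a b : ℚ} (h : RB L a b) : RB L b a := by
  obtain ⟨k, h | h⟩ := h
  · exact ⟨-k, Or.inl (by push_cast; linarith)⟩
  · exact ⟨k, Or.inr (by push_cast; linarith)⟩

lemma RB_trans {L a b c : ℚ} (h1 : RB L a b) (h2 : RB L b c) : RB L a c := by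
  obtain ⟨k, h1 | h1⟩ := h1 <;> obtain ⟨m, h2 | h2⟩ := h2
  · exact ⟨k + m, Or.inl (by push_cast; linarith)⟩
  · exact ⟨k + m, Or.inr (by push_cast; linarith)⟩
  · exact ⟨k - m, Or.inr (by push_cast; linarith)⟩
  · exact ⟨k - m, Or.inl (by push_cast; linarith)⟩

def Ccl (L q : ℚ) : Set ℚ := {r | RB L r q}

lemma Ccl_eq_of {L a b : ℚ} (h : RB L a b) : Ccl L a = Ccl L b := by
  ext r; exact ⟨fun h' => RB_trans h' h, fun h' => RB_trans h' (RB_symm h)⟩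

lemma mem_Ccl_self (L q : ℚ) : q ∈ Ccl L q := RB_refl L q

def Mi (N : ℕ) (L : ℚ) (x : Fin N → ℚ) : Multiset (Set ℚ) :=
  ∑ t : Fin N, ({Ccl L (x t)} : Multiset (Set ℚ))

def gi (L q : ℚ) : ZMod 2 :=
  ((⌊q / L⌋ : ℤ) : ZMod 2) + (if Int.fract (q / L) < 1/2 then 0 else 1)

def Fi (N : ℕ) (L : ℚ) (x : Fin N → ℚ) : ZMod 2 := ∑ t : Fin N, gi L (x t)

lemma gi_add_int_mul {L : ℚ} (hL : L ≠ 0) (q : ℚ) (k : ℤ) :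
    gi L (q + (k:ℚ) * L) = gi L q + (k : ZMod 2) := by
  have h : (q + (k:ℚ) * L) / L = q / L + (k:ℚ) := by
    rw [add_div, mul_div_cancel_right₀ _ hL]
  rw [gi, gi, h]
  rw [show q / L + (k:ℚ) = q / L + ((k:ℤ):ℚ) by norm_num]
  rw [Int.floor_add_intCast, Int.fract_add_intCast]
  push_cast
  ring

lemma gi_neg {L : ℚ} (hL : ∃ m : ℤ, L = 2 * (m:ℚ) ∧ m ≠ 0) {q : ℚ}
    (hq : HalfOdd q) : gi L (-q) = gi L q := by
  obtain ⟨m, hLm, hm⟩ := hL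
  obtain ⟨z, hz⟩ := hq
  have hLne : L ≠ 0 := by
    rw [hLm]
    intro h
    have hm0 : (m:ℚ) = 0 := by linarith
    exact hm (by exact_mod_cast hm0)
  have hfr0 : Int.fract (q / L) ≠ 0 := by
    intro h
    have hfl := Int.floor_add_fract (q / L)
    rw [h, add_zero] at hfl
    have hq' : q = (⌊q / L⌋ : ℚ) * L := (div_eq_iff hLne).mp hfl.symm
    have hcast : ((2*z + 1 : ℤ) : ℚ) = ((4 * ⌊q / L⌋ * m : ℤ) : ℚ) := by
      push_cast
      linear_combination 2 * hq' - 2 * hz + 2 * (⌊q / L⌋ : ℚ) * hLm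
    have hic := Int.cast_injective (α := ℚ) hcast
    have hdvd : (2:ℤ) ∣ (2*z + 1) := by
      rw [hic]; exact ⟨2 * ⌊q / L⌋ * m, by ring⟩
    omega
  have hfrh : Int.fract (q / L) ≠ 1/2 := by
    intro h
    have hfl := Int.floor_add_fract (q / L)
    rw [h] at hfl
    have hq' : q = ((⌊q / L⌋ : ℚ) + 1/2) * L := (div_eq_iff hLne).mp hfl.symm
    have hcast : ((2*z + 1 : ℤ) : ℚ) = ((4 * ⌊q / L⌋ * m + 2 * m : ℤ) : ℚ) := by
      push_cast
      linear_combination 2 * hq' - 2 * hz + (2 * (⌊q / L⌋ : ℚ) + 1) * hLm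
    have hic := Int.cast_injective (α := ℚ) hcast
    have hdvd : (2:ℤ) ∣ (2*z + 1) := by
      rw [hic]; exact ⟨2 * ⌊q / L⌋ * m + m, by ring⟩
    omega
  have hfneg : Int.fract (-(q / L)) = 1 - Int.fract (q / L) := Int.fract_neg hfr0
  have hflneg : (⌊-(q / L)⌋ : ℚ) = -(⌊q / L⌋ : ℚ) - 1 := by
    have h1 := Int.floor_add_fract (-(q / L))
    have h2 := Int.floor_add_fract (q / L)
    rw [hfneg] at h1
    linarith
  have hfl' : ⌊-(q / L)⌋ = -⌊q / L⌋ - 1 := by exact_mod_cast hflneg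
  have h01 : 0 ≤ Int.fract (q / L) := Int.fract_nonneg _
  rw [gi, gi, neg_div, hfl', hfneg]
  rcases lt_or_gt_of_ne hfrh with h | h
  · rw [if_neg (show ¬(1 - Int.fract (q / L) < 1/2) by linarith), if_pos h]
    push_cast
    exact (by decide : ∀ a : ZMod 2, -a - 1 + 1 = a + 0) _
  · rw [if_pos (show 1 - Int.fract (q / L) < 1/2 by linarith),
        if_neg (show ¬(Int.fract (q / L) < 1/2) by linarith)]
    push_cast
    exact (by decide : ∀ a : ZMod 2, -a - 1 + 0 = a + 1) _

lemma invariants_of_form {N : ℕ} {L : ℚ} {x y : Fin N → ℚ}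
    (σ : Equiv.Perm (Fin N)) (e : Fin N → ℤ)
    (hform : ∀ t, y t = x (σ t) + (e t : ℚ) * L ∨ y t = -(x (σ t)) + (e t : ℚ) * L)
    (hpar : Even (∑ t, e t)) :
    (Mi N L y = Mi N L x) ∧
    ((∃ m : ℤ, L = (m:ℚ)) → (GoodV x ↔ GoodV y)) ∧
    ((∃ m : ℤ, L = 2 * (m:ℚ) ∧ m ≠ 0) → GoodV x → Fi N L y = Fi N L x) := by
  refine ⟨?_, ?_, ?_⟩
  · have h1 : ∀ t, Ccl L (y t) = Ccl L (x (σ t)) := by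
      intro t
      rcases hform t with h | h
      · exact Ccl_eq_of ⟨e t, Or.inl h⟩
      · exact Ccl_eq_of ⟨e t, Or.inr h⟩
    calc Mi N L y = ∑ t : Fin N, ({Ccl L (x (σ t))} : Multiset (Set ℚ)) :=
          Finset.sum_congr rfl (fun t _ => by rw [h1 t])
      _ = Mi N L x := Equiv.sum_comp σ (fun t => ({Ccl L (x t)} : Multiset (Set ℚ)))
  · rintro ⟨m, rfl⟩
    constructor
    · intro hx t
      rcases hform t with h | h
      · obtain ⟨z, hz⟩ := hx (σ t)
        exact ⟨z + e t * m, by rw [h, hz]; push_cast; ring⟩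
      · obtain ⟨z, hz⟩ := hx (σ t)
        exact ⟨-z - 1 + e t * m, by rw [h, hz]; push_cast; ring⟩
    · intro hy t
      have hform' := hform (σ.symm t)
      rw [Equiv.apply_symm_apply] at hform'
      obtain ⟨z, hz⟩ := hy (σ.symm t)
      rcases hform' with h | h
      · refine ⟨z - e (σ.symm t) * m, ?_⟩
        rw [hz] at h
        push_cast
        linarith
      · refine ⟨e (σ.symm t) * m - z - 1, ?_⟩
        rw [hz] at h
        push_cast
        linarith
  · intro hLm hx
    have hLne : L ≠ 0 := by
      obtain ⟨m, hm, hm0⟩ := hLm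
      rw [hm]
      intro h
      have hm1 : (m:ℚ) = 0 := by linarith
      exact hm0 (by exact_mod_cast hm1)
    have h1 : ∀ t, gi L (y t) = gi L (x (σ t)) + ((e t : ℤ) : ZMod 2) := by
      intro t
      rcases hform t with h | h
      · rw [h, gi_add_int_mul hLne]
      · rw [h, gi_add_int_mul hLne, gi_neg hLm (hx (σ t))]
    calc Fi N L y = ∑ t, (gi L (x (σ t)) + ((e t : ℤ) : ZMod 2)) :=
          Finset.sum_congr rfl (fun t _ => h1 t)
      _ = (∑ t, gi L (x (σ t))) + ∑ t, ((e t : ℤ) : ZMod 2) := Finset.sum_add_distrib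
      _ = Fi N L x + ((∑ t, e t : ℤ) : ZMod 2) := by
          rw [Equiv.sum_comp σ (fun t => gi L (x t))]
          push_cast
          rfl
      _ = Fi N L x := by
          obtain ⟨r, hr⟩ := hpar
          rw [hr]
          push_cast
          have h2 : ∀ a : ZMod 2, a + a = 0 := by decide
          rw [h2]
          ring

lemma sum_mul_eps {N : ℕ} (x : Fin N → ℚ) (i : Fin N) :
    ∑ s, x s * eps i s = x i := by
  simp [eps, mul_ite]




lemma step_inv {N ℓ : ℕ} (heven : Even ℓ) (hl : 3 < ℓ)
    {f : (Fin N → ℚ) → (Fin N → ℚ)} (href : IsBRef N ℓ f) (x : Fin N → ℚ) :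
    Mi N ((ℓ:ℚ)/2) (f x) = Mi N ((ℓ:ℚ)/2) x ∧
    (GoodV x ↔ GoodV (f x)) ∧
    (4 ∣ ℓ → GoodV x → Fi N ((ℓ:ℚ)/2) (f x) = Fi N ((ℓ:ℚ)/2) x) := by
  have hgcd : ((Nat.gcd ℓ 2 : ℕ) : ℚ) = 2 := by
    have h2 : 2 ∣ ℓ := heven.two_dvd
    rw [Nat.gcd_comm, Nat.gcd_eq_left h2]
    norm_num
  have hLint : ∃ m : ℤ, (ℓ:ℚ)/2 = (m : ℚ) := by
    obtain ⟨c, hc⟩ := heven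
    exact ⟨c, by rw [hc]; push_cast; ring⟩
  have hL4 : 4 ∣ ℓ → ∃ m : ℤ, (ℓ:ℚ)/2 = 2 * (m:ℚ) ∧ m ≠ 0 := by
    rintro ⟨d, hd⟩
    refine ⟨d, by rw [hd]; push_cast; ring, ?_⟩
    intro hd0
    have : d = 0 := by exact_mod_cast hd0
    omega
  obtain ⟨i, j, k, hij, hf | hf⟩ | ⟨i, k, hf⟩ := href
  · -- root ε_i − ε_j
    have hne : i ≠ j := ne_of_lt hij
    have hc : (k:ℚ) * ((ℓ : ℚ) / (Nat.gcd ℓ 2)) = (k:ℚ) * ((ℓ:ℚ)/2) := by rw [hgcd]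
    have hin : (∑ s, x s * (eps i - eps j) s) = x i - x j := by
      simp only [Pi.sub_apply, mul_sub, Finset.sum_sub_distrib, sum_mul_eps]
    have hform : ∀ t, f x t =
        x (Equiv.swap i j t) + (((if t = i then k else 0) + (if t = j then -k else 0) : ℤ) : ℚ) * ((ℓ:ℚ)/2) ∨
        f x t = -(x (Equiv.swap i j t)) + (((if t = i then k else 0) + (if t = j then -k else 0) : ℤ) : ℚ) * ((ℓ:ℚ)/2) := by
      intro t
      left
      have hfx : f x t = x t - ((x i - x j) - (k:ℚ) * ((ℓ:ℚ)/2)) * ((eps i - eps j) t) := by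
        rw [hf]
        show x t - ((∑ s, x s * (eps i - eps j) s) - _) * _ = _
        rw [hin, hc]
      by_cases hti : t = i
      · subst hti
        rw [hfx, Equiv.swap_apply_left]
        simp only [Pi.sub_apply, eps, if_pos rfl, if_neg hne, if_neg (Ne.symm hne)]
        push_cast
        ring
      · by_cases htj : t = j
        · subst htj
          rw [hfx, Equiv.swap_apply_right]
          simp only [Pi.sub_apply, eps, if_pos rfl, if_neg hne, if_neg (Ne.symm hne)]
          push_cast
          ring
        · rw [hfx, Equiv.swap_apply_of_ne_of_ne hti htj]
          simp only [Pi.sub_apply, eps, if_neg hti, if_neg htj]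
          push_cast
          ring
    have hpar : Even (∑ t, ((if t = i then k else 0) + (if t = j then -k else 0))) := by
      rw [Finset.sum_add_distrib]
      simp [Finset.sum_ite_eq']
    obtain ⟨hM, hG, hF⟩ := invariants_of_form (Equiv.swap i j) _ hform hpar
    exact ⟨hM, hG hLint, fun h4 => hF (hL4 h4)⟩
  · -- root ε_i + ε_j
    have hne : i ≠ j := ne_of_lt hij
    have hc : (k:ℚ) * ((ℓ : ℚ) / (Nat.gcd ℓ 2)) = (k:ℚ) * ((ℓ:ℚ)/2) := by rw [hgcd]
    have hin : (∑ s, x s * (eps i + eps j) s) = x i + x j := by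
      simp only [Pi.add_apply, mul_add, Finset.sum_add_distrib, sum_mul_eps]
    have hform : ∀ t, f x t =
        x (Equiv.swap i j t) + (((if t = i then k else 0) + (if t = j then k else 0) : ℤ) : ℚ) * ((ℓ:ℚ)/2) ∨
        f x t = -(x (Equiv.swap i j t)) + (((if t = i then k else 0) + (if t = j then k else 0) : ℤ) : ℚ) * ((ℓ:ℚ)/2) := by
      intro t
      have hfx : f x t = x t - ((x i + x j) - (k:ℚ) * ((ℓ:ℚ)/2)) * ((eps i + eps j) t) := by
        rw [hf]
        show x t - ((∑ s, x s * (eps i + eps j) s) - _) * _ = _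
        rw [hin, hc]
      by_cases hti : t = i
      · subst hti
        right
        rw [hfx, Equiv.swap_apply_left]
        simp only [Pi.add_apply, eps, if_pos rfl, if_neg hne, if_neg (Ne.symm hne)]
        push_cast
        ring
      · by_cases htj : t = j
        · subst htj
          right
          rw [hfx, Equiv.swap_apply_right]
          simp only [Pi.add_apply, eps, if_pos rfl, if_neg hne, if_neg (Ne.symm hne)]
          push_cast
          ring
        · left
          rw [hfx, Equiv.swap_apply_of_ne_of_ne hti htj]
          simp only [Pi.add_apply, eps, if_neg hti, if_neg htj]
          push_cast
          ring
    have hpar : Even (∑ t, ((if t = i then k else 0) + (if t = j then k else 0))) := by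
      rw [Finset.sum_add_distrib]
      simp only [Finset.sum_ite_eq', Finset.mem_univ, if_pos]
      exact ⟨k, rfl⟩
    obtain ⟨hM, hG, hF⟩ := invariants_of_form (Equiv.swap i j) _ hform hpar
    exact ⟨hM, hG hLint, fun h4 => hF (hL4 h4)⟩
  · -- short root ε_i
    have hin : (∑ s, x s * ((2:ℚ) • eps i) s) = 2 * x i := by
      simp only [Pi.smul_apply, smul_eq_mul]
      rw [show (∑ s, x s * (2 * eps i s)) = 2 * ∑ s, x s * eps i s by
        rw [Finset.mul_sum]; exact Finset.sum_congr rfl fun s _ => by ring]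
      rw [sum_mul_eps]
    have hform : ∀ t, f x t =
        x (Equiv.refl (Fin N) t) + (((if t = i then 2*k else 0) : ℤ) : ℚ) * ((ℓ:ℚ)/2) ∨
        f x t = -(x (Equiv.refl (Fin N) t)) + (((if t = i then 2*k else 0) : ℤ) : ℚ) * ((ℓ:ℚ)/2) := by
      intro t
      have hfx : f x t = x t - (2 * x i - (k:ℚ) * (ℓ:ℚ)) * (eps i t) := by
        rw [hf]
        show x t - ((∑ s, x s * ((2:ℚ) • eps i) s) - _) * _ = _
        rw [hin]
      by_cases hti : t = i
      · subst hti
        right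
        rw [hfx]
        simp only [Equiv.refl_apply, eps, if_pos rfl]
        push_cast
        ring
      · left
        rw [hfx]
        simp only [Equiv.refl_apply, eps, if_neg hti]
        push_cast
        ring
    have hpar : Even (∑ t, (if t = i then 2*k else 0)) := by
      simp only [Finset.sum_ite_eq', Finset.mem_univ, if_pos]
      exact ⟨k, by ring⟩
    obtain ⟨hM, hG, hF⟩ := invariants_of_form (Equiv.refl (Fin N)) _ hform hpar
    exact ⟨hM, hG hLint, fun h4 => hF (hL4 h4)⟩

lemma linked_inv {N ℓ : ℕ} (heven : Even ℓ) (hl : 3 < ℓ) {x y : Fin N → ℚ}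
    (h : BLinked N ℓ x y) :
    (GoodV x ↔ GoodV y) ∧
    (GoodV x → (Mi N ((ℓ:ℚ)/2) x = Mi N ((ℓ:ℚ)/2) y ∧
      (4 ∣ ℓ → Fi N ((ℓ:ℚ)/2) x = Fi N ((ℓ:ℚ)/2) y))) := by
  induction h with
  | rel u v huv =>
      obtain ⟨f, href, rfl⟩ := huv
      obtain ⟨hM, hG, hF⟩ := step_inv heven hl href u
      exact ⟨hG, fun hg => ⟨hM.symm, fun h4 => (hF h4 hg).symm⟩⟩
  | refl u => exact ⟨Iff.rfl, fun _ => ⟨rfl, fun _ => rfl⟩⟩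
  | symm u v h ih =>
      obtain ⟨hG, hI⟩ := ih
      refine ⟨hG.symm, fun hv => ?_⟩
      obtain ⟨hM, hF⟩ := hI (hG.mpr hv)
      exact ⟨hM.symm, fun h4 => (hF h4).symm⟩
  | trans u v w h1 h2 ih1 ih2 =>
      obtain ⟨hG1, hI1⟩ := ih1
      obtain ⟨hG2, hI2⟩ := ih2
      refine ⟨hG1.trans hG2, fun hu => ?_⟩
      obtain ⟨hM1, hF1⟩ := hI1 hu
      obtain ⟨hM2, hF2⟩ := hI2 (hG1.mp hu)
      exact ⟨hM1.trans hM2, fun h4 => (hF1 h4).trans (hF2 h4)⟩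

lemma sum_mul_two_eps {N : ℕ} (x : Fin N → ℚ) (i : Fin N) :
    ∑ s, x s * ((2:ℚ) • eps i) s = 2 * x i := by
  simp only [Pi.smul_apply, smul_eq_mul]
  rw [show (∑ s, x s * (2 * eps i s)) = 2 * ∑ s, x s * eps i s by
    rw [Finset.mul_sum]; exact Finset.sum_congr rfl fun s _ => by ring]
  rw [sum_mul_eps]


end BLaux

/-- Type `B` self-linkage, `ℓ` even, for `λ ∈ X^{1/2,+}` (integer entries, so the
entries of `λ+ρ` lie in `ℤ + 1/2`): if `μ = λ − ε_i` is dominant, then `μ` and `λ`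
are linked under `W_ℓ` if and only if `(λ+ρ)_i − 1/2 ≡ 0 (mod ℓ/2)`. -/


theorem linked_e_id_typeB_even_halfint (N ℓ : ℕ) (heven : Even ℓ) (hl : 3 < ℓ)
    (lam : Fin N → ℚ)
    (hint : ∀ t, ∃ z : ℤ, lam t = (z : ℚ))
    (hlam : DominantB N lam) (i : Fin N)
    (hmu : DominantB N (subEQ lam i)) :
    BLinked N ℓ (shiftB N (subEQ lam i)) (shiftB N lam) ↔
      ∃ z : ℤ, (lam i + ((N : ℚ) - ((i : ℕ) : ℚ) - 1/2)) - 1/2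
        = (z : ℚ) * ((ℓ : ℚ) / 2) := by
  classical
  set v := shiftB N (subEQ lam i) with hv
  set w := shiftB N lam with hw
  have hvw : ∀ t, t ≠ i → v t = w t := by
    intro t ht
    rw [hv, hw]
    simp [shiftB, subEQ, ht]
  have hvi : v i = w i - 1 := by
    rw [hv, hw]
    simp only [shiftB, subEQ, if_true, eq_self_iff_true]
    ring
  have hwi : w i = lam i + ((N : ℚ) - ((i : ℕ) : ℚ) - 1/2) := by rw [hw]; rfl
  have hLne : ((ℓ:ℚ)/2) ≠ 0 := by
    have h0 : (0:ℚ) < (ℓ:ℚ) := by exact_mod_cast Nat.zero_lt_of_lt hl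
    exact ne_of_gt (by linarith)
  have hGoodw : BLaux.GoodV w := by
    intro t
    obtain ⟨z, hz⟩ := hint t
    refine ⟨z + N - (t:ℕ) - 1, ?_⟩
    rw [hw]
    simp only [shiftB, hz]
    push_cast
    ring
  have hGoodv : BLaux.GoodV v := by
    intro t
    obtain ⟨z, hz⟩ := hint t
    by_cases ht : t = i
    · refine ⟨z + N - (t:ℕ) - 2, ?_⟩
      rw [hv]
      simp only [shiftB, subEQ, hz, if_pos ht]
      push_cast
      ring
    · refine ⟨z + N - (t:ℕ) - 1, ?_⟩
      rw [hv]
      simp only [shiftB, subEQ, hz, if_neg ht]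
      push_cast
      ring
  constructor
  · intro hlink
    obtain ⟨hG, hI⟩ := BLaux.linked_inv heven hl hlink
    obtain ⟨hM, hFi⟩ := hI hGoodv
    have hsplitM : ∀ u : Fin N → ℚ, BLaux.Mi N ((ℓ:ℚ)/2) u =
        ({BLaux.Ccl ((ℓ:ℚ)/2) (u i)} : Multiset (Set ℚ)) +
        ∑ t ∈ Finset.univ.erase i, ({BLaux.Ccl ((ℓ:ℚ)/2) (u t)} : Multiset (Set ℚ)) := by
      intro u
      simp only [BLaux.Mi]
      exact (Finset.add_sum_erase _ _ (Finset.mem_univ i)).symm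
    have htail : (∑ t ∈ Finset.univ.erase i, ({BLaux.Ccl ((ℓ:ℚ)/2) (v t)} : Multiset (Set ℚ)))
        = ∑ t ∈ Finset.univ.erase i, ({BLaux.Ccl ((ℓ:ℚ)/2) (w t)} : Multiset (Set ℚ)) :=
      Finset.sum_congr rfl fun t ht => by rw [hvw t (Finset.ne_of_mem_erase ht)]
    have hcl : BLaux.Ccl ((ℓ:ℚ)/2) (v i) = BLaux.Ccl ((ℓ:ℚ)/2) (w i) := by
      have h0 := hM
      rw [hsplitM v, hsplitM w, htail] at h0
      exact Multiset.singleton_inj.mp (add_right_cancel h0)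
    have hmem : BLaux.RB ((ℓ:ℚ)/2) (v i) (w i) := by
      have h0 := BLaux.mem_Ccl_self ((ℓ:ℚ)/2) (v i)
      rw [hcl] at h0
      exact h0
    obtain ⟨k, hk | hk⟩ := hmem
    · exfalso
      have hkl : ((k * (ℓ:ℤ) : ℤ) : ℚ) = -2 := by
        push_cast
        rw [hvi] at hk
        linarith
      have hkl' : (k * (ℓ:ℤ)) = -2 := by exact_mod_cast hkl
      have hdvd : (ℓ:ℤ) ∣ 2 := ⟨-k, by linarith⟩
      have hle : (ℓ:ℤ) ≤ 2 := Int.le_of_dvd (by norm_num) hdvd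
      have hle' : ℓ ≤ 2 := by exact_mod_cast hle
      omega
    · have h2w : 2 * w i - 1 = (k:ℚ) * ((ℓ:ℚ)/2) := by
        rw [hvi] at hk
        linarith
      obtain ⟨c, hc⟩ := heven
      have hLc : ((ℓ:ℚ)/2) = ((c:ℤ):ℚ) := by rw [hc]; push_cast; ring
      obtain ⟨m, hm⟩ := hGoodw i
      have hkc : 2 * m = k * (c:ℤ) := by
        have hq : ((2*m : ℤ):ℚ) = ((k * (c:ℤ) : ℤ):ℚ) := by
          rw [hm, hLc] at h2w
          push_cast at h2w ⊢
          linarith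
        exact_mod_cast hq
      have hkeven : Even k := by
        rcases Nat.even_or_odd c with hce | hco
        · obtain ⟨d, hd⟩ := hce
          have h4 : 4 ∣ ℓ := ⟨d, by omega⟩
          have hFeq := hFi h4
          have hsplitF : ∀ u : Fin N → ℚ, BLaux.Fi N ((ℓ:ℚ)/2) u =
              BLaux.gi ((ℓ:ℚ)/2) (u i) + ∑ t ∈ Finset.univ.erase i, BLaux.gi ((ℓ:ℚ)/2) (u t) := by
            intro u
            simp only [BLaux.Fi]
            exact (Finset.add_sum_erase _ _ (Finset.mem_univ i)).symm
          have htailF : (∑ t ∈ Finset.univ.erase i, BLaux.gi ((ℓ:ℚ)/2) (v t))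
              = ∑ t ∈ Finset.univ.erase i, BLaux.gi ((ℓ:ℚ)/2) (w t) :=
            Finset.sum_congr rfl fun t ht => by rw [hvw t (Finset.ne_of_mem_erase ht)]
          rw [hsplitF v, hsplitF w, htailF] at hFeq
          have hgi : BLaux.gi ((ℓ:ℚ)/2) (v i) = BLaux.gi ((ℓ:ℚ)/2) (w i) :=
            add_right_cancel hFeq
          have hL2 : ∃ m' : ℤ, ((ℓ:ℚ)/2) = 2 * ((m':ℤ):ℚ) ∧ m' ≠ 0 := by
            refine ⟨d, by rw [hc, hd]; push_cast; ring, ?_⟩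
            intro hd0
            have hd0' : d = 0 := by exact_mod_cast hd0
            omega
          rw [hk, BLaux.gi_add_int_mul hLne, BLaux.gi_neg hL2 (hGoodw i)] at hgi
          have hk0 : ((k:ℤ) : ZMod 2) = 0 := by
            have h0 := hgi
            rwa [add_eq_left] at h0
          have hkd := (ZMod.intCast_zmod_eq_zero_iff_dvd k 2).mp hk0
          obtain ⟨r, hr⟩ := hkd
          exact ⟨r, by omega⟩
        · have hek : Even (k * (c:ℤ)) := ⟨m, by linarith⟩
          rcases Int.even_mul.mp hek with h | h
          · exact h
          · exfalso
            have hce : Even c := by exact_mod_cast h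
            exact (Nat.not_even_iff_odd.mpr hco) hce
      obtain ⟨z, hzk⟩ := hkeven
      refine ⟨z, ?_⟩
      rw [← hwi]
      have hkz : (k:ℚ) = (z:ℚ) + (z:ℚ) := by rw [hzk]; push_cast; ring
      rw [hkz] at h2w
      linarith
  · rintro ⟨z, hz⟩
    have h2wi : 2 * w i - 1 = (z:ℚ) * (ℓ:ℚ) := by
      rw [hwi]
      linarith
    refine Relation.EqvGen.symm _ _ (Relation.EqvGen.rel _ _
      ⟨affRef (eps i) ((2:ℚ) • eps i) ((z:ℚ) * (ℓ:ℚ)), Or.inr ⟨i, z, rfl⟩, ?_⟩)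
    funext t
    show v t = w t - ((∑ s, w s * ((2:ℚ) • eps i) s) - (z:ℚ) * (ℓ:ℚ)) * eps i t
    rw [BLaux.sum_mul_two_eps]
    by_cases ht : t = i
    · subst ht
      rw [hvi]
      simp only [eps, if_pos rfl, if_true, eq_self_iff_true]
      linarith
    · rw [hvw t ht]
      simp only [eps, if_neg ht]
      ring
end
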